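/- Let Q be any partition of V obtained from the trivial partition {V} by a finite sequence of refinement steps, each of which picks a part Q with some v ∈ Q satisfying max_{u∈Q} x(v,u) ≥ 1/3 and replaces Q by the two parts returned by One-Third-Refine-Cut(Q, v, x). Let NFPrs(Q) be the set of non-forbidden pairs whose two elements lie in different parts of Q. Then Σ_{ {i,j}∈NFPrs(Q), {i,j}∈E } x(i,j) + Σ_{ {i,j}∈NFPrs(Q), {i,j}∈NE } (1 − x(i,j)) + (1/6)·|{ {i,j}∈NFPrs(Q) : {i,j}∈NE }| ≥ (1/6)·|NFPrs(Q)|. -/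

import Mathlib

/-!
A separated pair that is not forbidden contributes at least `slack x = min (x - 1/6) (1 - x)` to
the difference of the two sides, `x - 1/6` if it is an edge pair and `1 - x` if not, while a
forbidden pair has slack `slack 1 = 0`. So it suffices that the separated pairs have nonnegative
total slack. A refinement step separates exactly the pairs across its cut, so this holds cut by cut:
for the singleton cut `{v}`, the slack of `(v, b)` is at least `x(v,b) - 1/6`, `1/6` or `0` according
as `b` lies in `B_{1/3}`, in `B_{1/2} ∖ B_{1/3}` or outside `B_{1/2}`, and these bounds sum to the test
quantity of One-Third-Refine-Cut. For the ball cut, the triangle inequality through `v` bounds the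
slack of `(a, b)`, `a ∈ B_{1/3}`, below by `1/6 - x(v,a)` if `b ∈ B_{1/2}` and by `0` otherwise, and
the failed test gives `Σ_{a ∈ B_{1/3}} x(v,a) ≤ |B_{1/3}| / 6`.
-/

open Finset
open scoped Classical

/-- `cutBall x v Q r` is the set of elements of `Q` at distance `< r` from `v`. -/
noncomputable def cutBall {V : Type*} [DecidableEq V]
    (x : V → V → ℝ) (v : V) (Q : Finset V) (r : ℝ) : Finset V :=
  Q.filter fun u => x v u < r

/-- The procedure One-Third-Refine-Cut: it returns `({v}, Q ∖ {v})` if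
`Σ_{q∈B_{1/3}} x(v,q) ≥ (1/3)|B_{1/3}| − (1/6)|B_{1/2}| − 1/6`,
and `(B_{1/3}, Q ∖ B_{1/3})` otherwise. -/
noncomputable def oneThirdCut {V : Type*} [DecidableEq V]
    (x : V → V → ℝ) (Q : Finset V) (v : V) : Finset V × Finset V :=
  if (1 / 3 : ℝ) * (cutBall x v Q (1 / 3)).card
        - (1 / 6) * (cutBall x v Q (1 / 2)).card - 1 / 6
      ≤ ∑ q ∈ cutBall x v Q (1 / 3), x v q
  then ({v}, Q \ {v})
  else (cutBall x v Q (1 / 3), Q \ cutBall x v Q (1 / 3))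

/-- The families of sets obtainable from the trivial partition `{V}` by a finite
sequence of refinement steps, each replacing a part `Q` having some `v ∈ Q`
with `max_{u∈Q} x(v,u) ≥ 1/3` by the two parts returned by
One-Third-Refine-Cut. -/
inductive ReachedBy {V : Type*} [Fintype V] [DecidableEq V] (x : V → V → ℝ) :
    Finset (Finset V) → Prop
  | init : ReachedBy x {Finset.univ}
  | step (𝒬 : Finset (Finset V)) (Q : Finset V) (v : V)
      (h𝒬 : ReachedBy x 𝒬) (hQ : Q ∈ 𝒬) (hv : v ∈ Q)
      (hmax : ∃ u ∈ Q, 1 / 3 ≤ x v u) :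
      ReachedBy x (insert (oneThirdCut x Q v).1
        (insert (oneThirdCut x Q v).2 (𝒬.erase Q)))

/-- Both endpoints of the unordered pair `e` lie in a common part of `𝒬`. -/
def InSamePart {V : Type*} (𝒬 : Finset (Finset V)) (e : Sym2 V) : Prop :=
  ∃ u w, e = s(u, w) ∧ ∃ P ∈ 𝒬, u ∈ P ∧ w ∈ P

/-- The unordered pair `e` is an edge pair of the relation `E`. -/
def EdgePair {V : Type*} (E : V → V → Prop) (e : Sym2 V) : Prop :=
  ∃ u w, e = s(u, w) ∧ E u w

noncomputable def slack (t : ℝ) : ℝ := min (t - 1 / 6) (1 - t)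

lemma slack_one : slack 1 = 0 := by norm_num [slack]

lemma slack_ge_piecewise {t : ℝ} (ht : t ≤ 1) :
    (if t < 1 / 3 then t - 1 / 6 else if t < 1 / 2 then 1 / 6 else 0) ≤ slack t := by
  unfold slack
  split_ifs <;> apply le_min <;> linarith

lemma slack_ge_of_near_far {V : Type*} (x : V → V → ℝ) (v : V) (hsym : ∀ u w, x u w = x w u)
    (hub : ∀ u w, x u w ≤ 1) (htri : ∀ u w p, x u w ≤ x u p + x p w) {a b : V}
    (ha : x v a < 1 / 3) (hb : 1 / 3 ≤ x v b) :
    (if x v b < 1 / 2 then 1 / 6 - x v a else 0) ≤ slack (x a b) := by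
  have h₁ := htri v b a
  have h₂ := htri a b v
  rw [hsym a v] at h₂
  unfold slack
  split_ifs <;> apply le_min <;> linarith [hub a b]

section OneThirdCut

variable {V : Type*} [DecidableEq V] (x : V → V → ℝ) (Q : Finset V) (v : V)

lemma cutBall_subset_cutBall {r s : ℝ} (hrs : r ≤ s) : cutBall x v Q r ⊆ cutBall x v Q s :=
  monotone_filter_right Q fun _ _ h => h.trans_le hrs

lemma sum_slack_singleton_cut_nonneg (hv : v ∈ Q) (hdiag : x v v = 0) (hub : ∀ w, x v w ≤ 1)
    (h : (1 / 3 : ℝ) * #(cutBall x v Q (1 / 3)) - (1 / 6) * #(cutBall x v Q (1 / 2)) - 1 / 6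
      ≤ ∑ q ∈ cutBall x v Q (1 / 3), x v q) :
    0 ≤ ∑ b ∈ Q \ {v}, slack (x v b) := by
  set g : ℝ → ℝ := fun t => if t < 1 / 3 then t - 1 / 6 else if t < 1 / 2 then 1 / 6 else 0
  have hball : (Q.filter fun b => ¬ x v b < 1 / 3).filter (fun b => x v b < 1 / 2)
      = cutBall x v Q (1 / 2) \ cutBall x v Q (1 / 3) := by
    ext b; simp only [cutBall, mem_filter, mem_sdiff]; tauto
  have hsum : ∑ b ∈ Q, g (x v b) = ∑ q ∈ cutBall x v Q (1 / 3), x v q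
      - (1 / 6) * #(cutBall x v Q (1 / 3))
      + (1 / 6) * (#(cutBall x v Q (1 / 2)) - #(cutBall x v Q (1 / 3))) := by
    simp only [g, sum_ite, sum_sub_distrib, sum_const, hball, nsmul_eq_mul, smul_zero, add_zero,
      card_sdiff_of_subset (cutBall_subset_cutBall x Q v (by norm_num : (1 / 3 : ℝ) ≤ 1 / 2))]
    rw [Nat.cast_sub (card_le_card (cutBall_subset_cutBall x Q v (by norm_num)))]
    simp only [cutBall]
    ring
  have hgv : g (x v v) = -(1 / 6) := by norm_num [g, hdiag]
  calc (0 : ℝ) ≤ ∑ b ∈ Q, g (x v b) - g (x v v) := by rw [hsum, hgv]; linarith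
    _ = ∑ b ∈ Q \ {v}, g (x v b) := by rw [← erase_eq, sum_erase_eq_sub hv]
    _ ≤ ∑ b ∈ Q \ {v}, slack (x v b) := sum_le_sum fun b _ => slack_ge_piecewise (hub b)

lemma sum_slack_ball_cut_nonneg (hsym : ∀ u w, x u w = x w u) (hub : ∀ u w, x u w ≤ 1)
    (htri : ∀ u w p, x u w ≤ x u p + x p w)
    (h : ∑ q ∈ cutBall x v Q (1 / 3), x v q
      < (1 / 3 : ℝ) * #(cutBall x v Q (1 / 3)) - (1 / 6) * #(cutBall x v Q (1 / 2)) - 1 / 6) :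
    0 ≤ ∑ a ∈ cutBall x v Q (1 / 3), ∑ b ∈ Q \ cutBall x v Q (1 / 3), slack (x a b) := by
  set B₁ := cutBall x v Q (1 / 3)
  set B₂ := cutBall x v Q (1 / 2)
  have hB : B₁ ⊆ B₂ := cutBall_subset_cutBall x Q v (by norm_num)
  have hshell : (Q \ B₁).filter (fun b => x v b < 1 / 2) = B₂ \ B₁ := by
    ext b; simp only [B₁, B₂, cutBall, mem_filter, mem_sdiff]; tauto
  have hrow : ∀ a ∈ B₁, #(B₂ \ B₁) * (1 / 6 - x v a) ≤ ∑ b ∈ Q \ B₁, slack (x a b) := by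
    intro a ha
    calc #(B₂ \ B₁) * (1 / 6 - x v a)
        = ∑ b ∈ Q \ B₁, if x v b < 1 / 2 then 1 / 6 - x v a else 0 := by
          rw [sum_ite, hshell]; simp [mul_sub]
      _ ≤ ∑ b ∈ Q \ B₁, slack (x a b) := by
          refine sum_le_sum fun b hb => slack_ge_of_near_far x v hsym hub htri ?_ ?_
          · exact (mem_filter.1 ha).2
          · simpa [B₁, cutBall, (mem_sdiff.1 hb).1] using (mem_sdiff.1 hb).2
  have hcard : (#B₁ : ℝ) ≤ #B₂ := by exact_mod_cast card_le_card hB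
  calc (0 : ℝ) ≤ #(B₂ \ B₁) * (1 / 6 * #B₁ - ∑ a ∈ B₁, x v a) := by
        apply mul_nonneg (Nat.cast_nonneg _); linarith
    _ = ∑ a ∈ B₁, #(B₂ \ B₁) * (1 / 6 - x v a) := by
        rw [← mul_sum, sum_sub_distrib, sum_const, nsmul_eq_mul]; ring
    _ ≤ _ := sum_le_sum hrow

lemma oneThirdCut_fst_subset (hv : v ∈ Q) : (oneThirdCut x Q v).1 ⊆ Q := by
  unfold oneThirdCut; split_ifs
  exacts [singleton_subset_iff.2 hv, filter_subset _ _]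

lemma oneThirdCut_snd : (oneThirdCut x Q v).2 = Q \ (oneThirdCut x Q v).1 := by
  unfold oneThirdCut; split_ifs <;> rfl

lemma sum_slack_oneThirdCut_nonneg (hsym : ∀ u w, x u w = x w u) (hdiag : ∀ u, x u u = 0)
    (hub : ∀ u w, x u w ≤ 1) (htri : ∀ u w p, x u w ≤ x u p + x p w) (hv : v ∈ Q) :
    0 ≤ ∑ a ∈ (oneThirdCut x Q v).1, ∑ b ∈ (oneThirdCut x Q v).2, slack (x a b) := by
  unfold oneThirdCut
  split_ifs with h
  · simpa using sum_slack_singleton_cut_nonneg x Q v hv (hdiag v) (hub v) h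
  · exact sum_slack_ball_cut_nonneg x Q v hsym hub htri (not_le.1 h)

end OneThirdCut

section Partition

variable {V : Type*}

lemma inSamePart_mk {𝒬 : Finset (Finset V)} {a b : V} :
    InSamePart 𝒬 s(a, b) ↔ ∃ P ∈ 𝒬, a ∈ P ∧ b ∈ P := by
  constructor
  · rintro ⟨u, w, he, P, hP, hu, hw⟩
    rcases Sym2.eq_iff.1 he with ⟨rfl, rfl⟩ | ⟨rfl, rfl⟩
    exacts [⟨P, hP, hu, hw⟩, ⟨P, hP, hw, hu⟩]
  · rintro ⟨P, hP, ha, hb⟩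
    exact ⟨a, b, rfl, P, hP, ha, hb⟩

noncomputable def separatedPairs [Fintype V] (𝒬 : Finset (Finset V)) : Finset (Sym2 V) :=
  univ.filter fun e => ¬ e.IsDiag ∧ ¬ InSamePart 𝒬 e

lemma mk_mem_separatedPairs [Fintype V] {𝒬 : Finset (Finset V)} {a b : V} :
    s(a, b) ∈ separatedPairs 𝒬 ↔ a ≠ b ∧ ¬ ∃ P ∈ 𝒬, a ∈ P ∧ b ∈ P := by
  simp [separatedPairs, inSamePart_mk]

lemma separatedPairs_singleton_univ [Fintype V] :
    separatedPairs ({univ} : Finset (Finset V)) = ∅ := by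
  ext e
  induction e using Sym2.ind
  simp [mk_mem_separatedPairs]

variable [DecidableEq V] {𝒬 : Finset (Finset V)} {Q A : Finset V}

lemma pairwiseDisjoint_refine (h𝒬 : (𝒬 : Set (Finset V)).PairwiseDisjoint id) (hQ : Q ∈ 𝒬)
    (hA : A ⊆ Q) :
    (↑(insert A (insert (Q \ A) (𝒬.erase Q))) : Set (Finset V)).PairwiseDisjoint id := by
  have hout : ∀ P ∈ 𝒬.erase Q, Disjoint Q P := fun P hP =>
    h𝒬 hQ (mem_of_mem_erase hP) (ne_of_mem_erase hP).symm
  rw [coe_insert, coe_insert, Set.pairwiseDisjoint_insert, Set.pairwiseDisjoint_insert]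
  refine ⟨⟨h𝒬.subset (by simp), fun P hP _ => (hout P hP).mono_left sdiff_subset⟩, ?_⟩
  rintro P (rfl | hP) _
  · exact disjoint_sdiff
  · exact (hout P hP).mono_left hA

lemma separatedPairs_refine [Fintype V] (h𝒬 : (𝒬 : Set (Finset V)).PairwiseDisjoint id)
    (hQ : Q ∈ 𝒬) (hA : A ⊆ Q) :
    separatedPairs (insert A (insert (Q \ A) (𝒬.erase Q)))
      = separatedPairs 𝒬 ∪ (A ×ˢ (Q \ A)).image fun p => s(p.1, p.2) := by
  have hout : ∀ P ∈ 𝒬, P ≠ Q → ∀ c ∈ P, c ∉ Q := fun P hP hne _ hc hcQ =>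
    disjoint_left.1 (h𝒬 hP hQ hne) hc hcQ
  ext e
  induction e using Sym2.ind with | _ a b => ?_
  simp only [mem_union, mk_mem_separatedPairs, mem_image, mem_product, Prod.exists, Sym2.eq_iff,
    ne_eq, mem_insert, mem_erase, exists_eq_or_imp, mem_sdiff, not_or, not_and,
    Decidable.not_not, and_imp, not_exists]
  constructor
  · rintro ⟨hab, hAA, hRR, hother⟩
    by_cases hsep : ∀ P ∈ 𝒬, a ∈ P → b ∉ P
    · exact Or.inl ⟨hab, hsep⟩
    push Not at hsep
    obtain ⟨P, hP, haP, hbP⟩ := hsep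
    obtain rfl : P = Q := by_contra fun hne => hother P hne hP haP hbP
    right
    by_cases haA : a ∈ A
    exacts [⟨a, b, ⟨haA, hbP, hAA haA⟩, .inl ⟨rfl, rfl⟩⟩,
      ⟨b, a, ⟨hRR haP haA hbP, haP, haA⟩, .inr ⟨rfl, rfl⟩⟩]
  · rintro (⟨hab, hsep⟩ | ⟨c, d, ⟨hc, hdQ, hdA⟩, ⟨rfl, rfl⟩ | ⟨rfl, rfl⟩⟩)
    · refine ⟨hab, fun ha hb => hsep Q hQ (hA ha) (hA hb),
        fun ha _ hb => (hsep Q hQ ha hb).elim,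
        fun P hne hP ha => hsep P hP ha⟩
    · exact ⟨fun h => hdA (h ▸ hc), fun _ => hdA, fun _ h => absurd hc h,
        fun P hne hP hcP => absurd (hA hc) (hout P hP hne c hcP)⟩
    · exact ⟨fun h => hdA (h ▸ hc), fun h => absurd h hdA, fun _ _ _ => hc,
        fun P hne hP hdP => absurd hdQ (hout P hP hne d hdP)⟩

lemma sum_separatedPairs_refine [Fintype V] {M : Type*} [AddCommMonoid M]
    (h𝒬 : (𝒬 : Set (Finset V)).PairwiseDisjoint id) (hQ : Q ∈ 𝒬) (hA : A ⊆ Q)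
    (f : Sym2 V → M) :
    ∑ e ∈ separatedPairs (insert A (insert (Q \ A) (𝒬.erase Q))), f e
      = ∑ e ∈ separatedPairs 𝒬, f e + ∑ a ∈ A, ∑ b ∈ Q \ A, f s(a, b) := by
  have hdisj : Disjoint (separatedPairs 𝒬) ((A ×ˢ (Q \ A)).image fun p => s(p.1, p.2)) := by
    refine disjoint_left.2 fun e he hcut => ?_
    obtain ⟨⟨a, b⟩, hab, rfl⟩ := mem_image.1 hcut
    rw [mem_product, mem_sdiff] at hab
    exact (mk_mem_separatedPairs.1 he).2 ⟨Q, hQ, hA hab.1, hab.2.1⟩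
  have hinj : Set.InjOn (fun p : V × V => s(p.1, p.2)) (A ×ˢ (Q \ A) : Finset (V × V)) := by
    rintro ⟨a, b⟩ hab ⟨c, d⟩ hcd h
    simp only [coe_product, Set.mem_prod, mem_coe, mem_sdiff] at hab hcd
    rcases Sym2.eq_iff.1 h with ⟨rfl, rfl⟩ | ⟨rfl, rfl⟩
    exacts [rfl, (hcd.2.2 hab.1).elim]
  rw [separatedPairs_refine h𝒬 hQ hA, sum_union hdisj, sum_image hinj, sum_product]

end Partition

section Reached

variable {V : Type*} [Fintype V] [DecidableEq V] {x : V → V → ℝ} {𝒬 : Finset (Finset V)}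

lemma ReachedBy.pairwiseDisjoint (h : ReachedBy x 𝒬) :
    (𝒬 : Set (Finset V)).PairwiseDisjoint id := by
  induction h with
  | init => simp
  | step 𝒬 Q v _ hQ hv _ ih =>
    rw [oneThirdCut_snd]
    exact pairwiseDisjoint_refine ih hQ (oneThirdCut_fst_subset x Q v hv)

lemma ReachedBy.sum_slack_separatedPairs_nonneg (hsym : ∀ u w, x u w = x w u)
    (hdiag : ∀ u, x u u = 0) (hub : ∀ u w, x u w ≤ 1) (htri : ∀ u w p, x u w ≤ x u p + x p w)
    (h : ReachedBy x 𝒬) :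
    0 ≤ ∑ e ∈ separatedPairs 𝒬, slack (Sym2.lift ⟨x, hsym⟩ e) := by
  induction h with
  | init => simp [separatedPairs_singleton_univ]
  | step 𝒬 Q v h𝒬 hQ hv _ ih =>
    have hcut := sum_slack_oneThirdCut_nonneg x Q v hsym hdiag hub htri hv
    rw [oneThirdCut_snd] at hcut ⊢
    rw [sum_separatedPairs_refine h𝒬.pairwiseDisjoint hQ (oneThirdCut_fst_subset x Q v hv)]
    simpa using add_nonneg ih hcut

end Reached

lemma card_div_six_le_of_sum_slack_nonneg {α : Type*} (s : Finset α) (p : α → Prop)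
    [DecidablePred p] (f : α → ℝ) (h : 0 ≤ ∑ a ∈ s, slack (f a)) :
    1 / 6 * #s ≤ ∑ a ∈ s with p a, f a + ∑ a ∈ s with ¬ p a, (1 - f a)
      + 1 / 6 * #{a ∈ s | ¬ p a} := by
  have hle : ∑ a ∈ s, slack (f a)
      ≤ ∑ a ∈ s with p a, (f a - 1 / 6) + ∑ a ∈ s with ¬ p a, (1 - f a) := by
    rw [← sum_filter_add_sum_filter_not s p]
    exact add_le_add (sum_le_sum fun _ _ => min_le_left _ _)
      (sum_le_sum fun _ _ => min_le_right _ _)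
  have hcard : (#s : ℝ) = #{a ∈ s | p a} + #{a ∈ s | ¬ p a} := by
    exact_mod_cast (card_filter_add_card_filter_not p).symm
  rw [sum_sub_distrib, sum_const, nsmul_eq_mul] at hle
  linarith

theorem stmt8_general {V : Type*} [Fintype V] [DecidableEq V]
    (x : V → V → ℝ)
    (hsym : ∀ u w, x u w = x w u) (hdiag : ∀ u, x u u = 0)
    (hub : ∀ u w, x u w ≤ 1)
    (htri : ∀ u w p, x u w ≤ x u p + x p w)
    (E : V → V → Prop)
    (𝒬 : Finset (Finset V)) (h𝒬 : ReachedBy x 𝒬) :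
    (1 / 6 : ℝ) *
        (Finset.univ.filter (fun e : Sym2 V =>
          ¬ e.IsDiag ∧ ¬ InSamePart 𝒬 e ∧
            ¬ (¬ EdgePair E e ∧ Sym2.lift ⟨x, hsym⟩ e = 1))).card
      ≤ (∑ e ∈ Finset.univ.filter (fun e : Sym2 V =>
            ¬ e.IsDiag ∧ ¬ InSamePart 𝒬 e ∧
              ¬ (¬ EdgePair E e ∧ Sym2.lift ⟨x, hsym⟩ e = 1) ∧ EdgePair E e),
            Sym2.lift ⟨x, hsym⟩ e)
        + (∑ e ∈ Finset.univ.filter (fun e : Sym2 V =>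
            ¬ e.IsDiag ∧ ¬ InSamePart 𝒬 e ∧
              ¬ (¬ EdgePair E e ∧ Sym2.lift ⟨x, hsym⟩ e = 1) ∧ ¬ EdgePair E e),
            (1 - Sym2.lift ⟨x, hsym⟩ e))
        + (1 / 6 : ℝ) *
            (Finset.univ.filter (fun e : Sym2 V =>
              ¬ e.IsDiag ∧ ¬ InSamePart 𝒬 e ∧
                ¬ (¬ EdgePair E e ∧ Sym2.lift ⟨x, hsym⟩ e = 1) ∧ ¬ EdgePair E e)).card := by
  have hNF := h𝒬.sum_slack_separatedPairs_nonneg hsym hdiag hub htri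
  rw [← sum_filter_of_ne (p := fun e => ¬ (¬ EdgePair E e ∧ Sym2.lift ⟨x, hsym⟩ e = 1))
    fun e _ hne hforb => hne (by rw [hforb.2, slack_one])] at hNF
  convert card_div_six_le_of_sum_slack_nonneg _ (EdgePair E) (Sym2.lift ⟨x, hsym⟩) hNF using 3 <;>
    simp only [separatedPairs, filter_filter, and_assoc]

/-- Corollary 4.7: for any partition `𝒬` obtained from `{V}` by refinement steps
of One-Third-Refine-Cut, with `NFPrs(𝒬)` the non-forbidden pairs separated by
`𝒬`, one has
`Σ_{NFPrs(𝒬)∩E} x(i,j) + Σ_{NFPrs(𝒬)∩NE} (1 − x(i,j)) + (1/6)|NFPrs(𝒬)∩NE|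
  ≥ (1/6)|NFPrs(𝒬)|`. -/
theorem stmt8 {V : Type*} [Fintype V] [DecidableEq V]
    (x : V → V → ℝ)
    (hsym : ∀ u w, x u w = x w u) (hdiag : ∀ u, x u u = 0)
    (hnn : ∀ u w, 0 ≤ x u w) (hub : ∀ u w, x u w ≤ 1)
    (htri : ∀ u w p, x u w ≤ x u p + x p w)
    (E : V → V → Prop) (hEsym : ∀ u w, E u w ↔ E w u) (hEirr : ∀ u, ¬ E u u)
    (𝒬 : Finset (Finset V)) (h𝒬 : ReachedBy x 𝒬) :
    (1 / 6 : ℝ) *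
        (Finset.univ.filter (fun e : Sym2 V =>
          ¬ e.IsDiag ∧ ¬ InSamePart 𝒬 e ∧
            ¬ (¬ EdgePair E e ∧ Sym2.lift ⟨x, hsym⟩ e = 1))).card
      ≤ (∑ e ∈ Finset.univ.filter (fun e : Sym2 V =>
            ¬ e.IsDiag ∧ ¬ InSamePart 𝒬 e ∧
              ¬ (¬ EdgePair E e ∧ Sym2.lift ⟨x, hsym⟩ e = 1) ∧ EdgePair E e),
            Sym2.lift ⟨x, hsym⟩ e)
        + (∑ e ∈ Finset.univ.filter (fun e : Sym2 V =>
            ¬ e.IsDiag ∧ ¬ InSamePart 𝒬 e ∧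
              ¬ (¬ EdgePair E e ∧ Sym2.lift ⟨x, hsym⟩ e = 1) ∧ ¬ EdgePair E e),
            (1 - Sym2.lift ⟨x, hsym⟩ e))
        + (1 / 6 : ℝ) *
            (Finset.univ.filter (fun e : Sym2 V =>
              ¬ e.IsDiag ∧ ¬ InSamePart 𝒬 e ∧
                ¬ (¬ EdgePair E e ∧ Sym2.lift ⟨x, hsym⟩ e = 1) ∧ ¬ EdgePair E e)).card :=
  stmt8_general x hsym hdiag hub htri E 𝒬 h𝒬
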